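/- arXiv:2102.10173 — 4 statements merged into one kernel-verified Lean document; each statement's English description precedes it below -/
import Mathlib

section
/- Let (b₀,b₁,…) be a sequence of integers with |b_n| ≥ 2 for all n ≥ 1. Then the continued fraction [b₀,b₁,…] converges to a real number α with b₀ − 1 ≤ α ≤ b₀ + 1. Moreover α = b₀ − 1 if and only if b_n = 2 for all n ≥ 1, and α = b₀ + 1 if and only if b_n = −2 for all n ≥ 1. -/
/-!
The convergents are `v_n = p_n / q_n` with `p_{n+1} q_n - p_n q_{n+1} = -1` and, since
`|b_n| ≥ 2`, `|q_{n+1}| ≥ |q_n| + 1`, so `|q_n| ≥ n + 1`. Hence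
`v_n = b₀ - ∑_{k<n} 1 / (q_{k+1} q_k)`, a series dominated termwise by
`∑ 1 / ((k+1)(k+2)) = 1`, and `α = b₀ - T` with `|T| ≤ 1`. Equality `T = 1` forces every term
to be extremal, i.e. `q_{k+1} q_k = (k+1)(k+2)`, i.e. `q_n = n + 1`, i.e. `b_n = 2`.
Replacing every `b_n` by `-b_n` changes `q_n` by the sign `(-1)^n` and hence `T` into `-T`,
which gives the case `α = b₀ + 1`.
-/

open Filter Topology OnePoint

/-- The Möbius map `z ↦ b - 1/z` on the one-point compactification `ℝ∞` of `ℝ`. -/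
noncomputable def mob (b : ℤ) (z : OnePoint ℝ) : OnePoint ℝ :=
  Option.elim z ((b : ℝ) : OnePoint ℝ)
    (fun x => if x = 0 then (∞ : OnePoint ℝ) else (((b : ℝ) - 1 / x : ℝ) : OnePoint ℝ))

/-- Value of a finite continued fraction `[b₀, …, b_m]`, i.e. `s₀(s₁(⋯ s_m(∞)))`. -/
noncomputable def cfVal : List ℤ → OnePoint ℝ
  | [] => ∞
  | b :: t => mob b (cfVal t)

/-- The `n`th convergent `v_n = S_n(∞)` of the continued fraction `[b₀, b₁, …]`. -/
noncomputable def cfConv (b : ℕ → ℤ) (n : ℕ) : OnePoint ℝ :=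
  cfVal ((List.range (n + 1)).map b)

/-- `m` is a positive index at which the coefficient is `0`, `1` or `-1`. -/
def badIdx (b : ℕ → ℤ) (m : ℕ) : Prop :=
  1 ≤ m ∧ (b m = 0 ∨ b m = 1 ∨ b m = -1)

instance (b : ℕ → ℤ) : DecidablePred (badIdx b) := fun m => by
  unfold badIdx; infer_instance

-- The singularization map `Φ` on integer sequences.
open Classical in
noncomputable def Phi (b : ℕ → ℤ) : ℕ → ℤ :=
  if h : ∃ m, badIdx b m then
    let m := Nat.find h
    if b m = 0 then
      fun k => if k + 1 < m then b k
        else if k = m - 1 then b (m - 1) + b (m + 1)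
        else b (k + 2)
    else if b m = 1 then
      fun k => if k + 1 < m then b k
        else if k = m - 1 then b (m - 1) - 1
        else if k = m then b (m + 1) - 1
        else b (k + 1)
    else
      fun k => if k + 1 < m then b k
        else if k = m - 1 then b (m - 1) + 1
        else if k = m then b (m + 1) + 1
        else b (k + 1)
  else b

-- `p(b) ∈ ℕ ∪ {∞}`: the least positive index at which `0`, `1` or `-1` occurs.
open Classical in
noncomputable def pIdx (b : ℕ → ℤ) : ℕ∞ :=
  if h : ∃ m, badIdx b m then (Nat.find h : ℕ∞) else ⊤

/-- `p⁽ⁿ⁾ → ∞` as `n → ∞`. -/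
def PTendsToTop (b : ℕ → ℤ) : Prop :=
  ∀ N : ℕ, ∃ M : ℕ, ∀ n ≥ M, (N : ℕ∞) < pIdx (Phi^[n] b)

/-- `p = liminf pⁿ`, as a natural number (junk value if the liminf is `∞`). -/
noncomputable def pLim (b : ℕ → ℤ) : ℕ :=
  (Filter.liminf (fun n => pIdx (Phi^[n] b)) Filter.atTop).toNat

/-- `q⁽ⁿ⁾ = |b⁽ⁿ⁾_{p-1}|`. -/
noncomputable def qSeq (b : ℕ → ℤ) (n : ℕ) : ℕ :=
  ((Phi^[n] b) (pLim b - 1)).natAbs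

/-- Two continued fractions have the same tail. -/
def SameTail (b c : ℕ → ℤ) : Prop := ∃ r s : ℕ, ∀ k : ℕ, b (r + k) = c (s + k)

/-- `bstar` is the limit continued fraction: each coefficient of `Φⁿ(b)` stabilises on it. -/
def EventuallyCoeff (b bstar : ℕ → ℤ) : Prop :=
  ∀ k : ℕ, ∃ N : ℕ, ∀ n ≥ N, Phi^[n] b k = bstar k

/-- The point of `ℝ∞` represented by the integer fraction `a/b` (`∞` when `b = 0`). -/
noncomputable def intPt (a b : ℤ) : OnePoint ℝ :=
  if b = 0 then ∞ else (((a : ℝ) / (b : ℝ)) : OnePoint ℝ)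

/-- Adjacency in the Farey graph: `x = a/b`, `y = c/d` with `ad - bc = ±1`. -/
def FareyAdj (x y : OnePoint ℝ) : Prop :=
  ∃ a b c d : ℤ, x = intPt a b ∧ y = intPt c d ∧
    (a * d - b * c = 1 ∨ a * d - b * c = -1)

/-- `x` is an extended rational, i.e. a member of `ℚ∞ = ℚ ∪ {∞} ⊆ ℝ∞`. -/
def IsExtRat (x : OnePoint ℝ) : Prop :=
  x = ∞ ∨ ∃ q : ℚ, x = ((q : ℝ) : OnePoint ℝ)

-- One step of the index-tracking sequence, for the current coefficient sequence `c`.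
open Classical in
noncomputable def eStep (c : ℕ → ℤ) (e : ℕ) : Option ℕ :=
  if h : ∃ m, badIdx c m then
    let m := Nat.find h
    if c m = 0 then
      if e + 2 ≤ m then Option.some e
      else if e = m - 1 ∨ e = m then (none : Option ℕ)
      else Option.some (e - 2)
    else
      if e + 2 ≤ m then Option.some e
      else if e = m - 1 then (none : Option ℕ)
      else Option.some (e - 1)
  else Option.some e

/-- The index-tracking sequence `e⁽⁰⁾(k), e⁽¹⁾(k), …` (`none` once it has terminated). -/
noncomputable def eSeq (b : ℕ → ℤ) (k : ℕ) : ℕ → Option ℕ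
  | 0 => Option.some k
  | n + 1 => (eSeq b k n).bind (eStep (Phi^[n] b))

/-- The recursion is `cfFrac (c :: t) = [[c, -1], [1, 0]] • cfFrac t`: `cfFrac l` is the first
column of the product of these matrices over `c ∈ l`. -/
def cfFrac : List ℤ → ℤ × ℤ
  | [] => (1, 0)
  | c :: t => (c * (cfFrac t).1 - (cfFrac t).2, (cfFrac t).1)

lemma cfFrac_ne_zero (l : List ℤ) : cfFrac l ≠ 0 := by
  induction l with
  | nil => simp [cfFrac]
  | cons c t ih =>
    intro h
    simp only [cfFrac, Prod.ext_iff, Prod.fst_zero, Prod.snd_zero] at h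
    obtain ⟨h₁, h₂⟩ := h
    rw [h₂, mul_zero, zero_sub, neg_eq_zero] at h₁
    exact ih (Prod.ext h₂ h₁)

lemma mob_coe (b : ℤ) (x : ℝ) :
    mob b x = if x = 0 then ∞ else (((b : ℝ) - 1 / x : ℝ) : OnePoint ℝ) := rfl

lemma cfVal_eq_intPt (l : List ℤ) : cfVal l = intPt (cfFrac l).1 (cfFrac l).2 := by
  induction l with
  | nil => simp [cfVal, cfFrac, intPt]
  | cons c t ih =>
    rw [cfVal, ih, cfFrac]
    have hne := cfFrac_ne_zero t
    generalize cfFrac t = pq at hne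
    obtain ⟨p, q⟩ := pq
    rcases eq_or_ne q 0 with rfl | hq
    · have hp : p ≠ 0 := fun hp => hne (by rw [hp]; rfl)
      simp only [intPt, if_pos, if_neg hp, sub_zero]
      show ((c : ℝ) : OnePoint ℝ) = _
      push_cast
      rw [mul_div_cancel_right₀ _ (Int.cast_ne_zero.mpr hp)]
    rcases eq_or_ne p 0 with rfl | hp
    · simp [intPt, hq, mob_coe]
    · have hpq : (p : ℝ) / q ≠ 0 := by simpa [hq] using hp
      simp only [intPt, if_neg hq, if_neg hp, mob_coe, if_neg hpq]
      congr 1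
      push_cast
      field_simp

lemma cfFrac_append_pair (l : List ℤ) (c d : ℤ) :
    cfFrac (l ++ [c, d]) = d • cfFrac (l ++ [c]) - cfFrac l := by
  induction l with
  | nil =>
    simp only [List.nil_append, cfFrac, Prod.ext_iff, Prod.smul_fst, Prod.smul_snd, Prod.fst_sub,
      Prod.snd_sub, smul_eq_mul, and_true]
    ring
  | cons a t ih =>
    simp only [List.cons_append, cfFrac, ih, Prod.ext_iff, Prod.smul_fst, Prod.smul_snd,
      Prod.fst_sub, Prod.snd_sub, smul_eq_mul, and_true]
    ring

def convNum (b : ℕ → ℤ) (n : ℕ) : ℤ := (cfFrac ((List.range (n + 1)).map b)).1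

def convDen (b : ℕ → ℤ) (n : ℕ) : ℤ := (cfFrac ((List.range (n + 1)).map b)).2

section Recurrences

variable (b : ℕ → ℤ)

lemma cfConv_eq_intPt (n : ℕ) : cfConv b n = intPt (convNum b n) (convDen b n) :=
  cfVal_eq_intPt _

lemma cfFrac_map_range_add_three (n : ℕ) :
    cfFrac ((List.range (n + 3)).map b) =
      b (n + 2) • cfFrac ((List.range (n + 2)).map b) - cfFrac ((List.range (n + 1)).map b) := by
  simp only [List.range_succ (n := n + 2), List.range_succ (n := n + 1), List.map_append,
    List.append_assoc]
  exact cfFrac_append_pair _ _ _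

lemma convNum_zero : convNum b 0 = b 0 := by simp [convNum, cfFrac]

lemma convDen_zero : convDen b 0 = 1 := by simp [convDen, cfFrac]

lemma convNum_one : convNum b 1 = b 0 * b 1 - 1 := by simp [convNum, cfFrac, List.range_succ]

lemma convDen_one : convDen b 1 = b 1 := by simp [convDen, cfFrac, List.range_succ]

lemma convNum_add_two (n : ℕ) :
    convNum b (n + 2) = b (n + 2) * convNum b (n + 1) - convNum b n := by
  simp [convNum, cfFrac_map_range_add_three]

lemma convDen_add_two (n : ℕ) :
    convDen b (n + 2) = b (n + 2) * convDen b (n + 1) - convDen b n := by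
  simp [convDen, cfFrac_map_range_add_three]

lemma convNum_succ_mul_convDen_sub (n : ℕ) :
    convNum b (n + 1) * convDen b n - convNum b n * convDen b (n + 1) = -1 := by
  induction n with
  | zero => rw [convNum_zero, convDen_zero, convNum_one, convDen_one]; ring
  | succ m ih => rw [convNum_add_two, convDen_add_two]; linear_combination ih

lemma convDen_neg (n : ℕ) : convDen (-b) n = (-1) ^ n * convDen b n := by
  induction n using Nat.twoStepInduction with
  | zero => simp [convDen_zero]
  | one => simp [convDen_one]
  | more n ih₀ ih₁ => rw [convDen_add_two, convDen_add_two, ih₀, ih₁, Pi.neg_apply]; ring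

end Recurrences

lemma convDen_eq_succ_iff (b : ℕ → ℤ) :
    (∀ n, convDen b n = n + 1) ↔ ∀ n, 1 ≤ n → b n = 2 := by
  constructor
  · intro hQ n hn
    obtain ⟨m, rfl | rfl⟩ : ∃ m, n = 1 ∨ n = m + 2 := ⟨n - 2, by omega⟩
    · simpa [convDen_one] using hQ 1
    · have h := convDen_add_two b m
      rw [hQ, hQ, hQ] at h
      push_cast at h
      have h' : (b (m + 2) - 2) * ((m : ℤ) + 2) = 0 := by linear_combination -h
      exact sub_eq_zero.mp ((mul_eq_zero.mp h').resolve_right (by positivity))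
  · intro h2 n
    induction n using Nat.twoStepInduction with
    | zero => simp [convDen_zero]
    | one => simp [convDen_one, h2 1 le_rfl]
    | more n ih₀ ih₁ =>
      rw [convDen_add_two, ih₀, ih₁, h2 (n + 2) (by omega)]
      push_cast
      ring

section Growth

variable {b : ℕ → ℤ}

lemma abs_convDen_add_one_le (hb : ∀ n, 1 ≤ n → 2 ≤ |b n|) (n : ℕ) :
    |convDen b n| + 1 ≤ |convDen b (n + 1)| := by
  induction n with
  | zero => simpa [convDen_zero, convDen_one] using hb 1 le_rfl
  | succ m ih =>
    have h_rev := abs_sub_abs_le_abs_sub (b (m + 2) * convDen b (m + 1)) (convDen b m)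
    rw [abs_mul] at h_rev
    rw [convDen_add_two]
    nlinarith [hb (m + 2) (by omega), abs_nonneg (convDen b (m + 1))]

lemma succ_le_abs_convDen (hb : ∀ n, 1 ≤ n → 2 ≤ |b n|) (n : ℕ) :
    (n : ℤ) + 1 ≤ |convDen b n| := by
  induction n with
  | zero => simp [convDen_zero]
  | succ m ih => push_cast; linarith [abs_convDen_add_one_le hb m]

lemma convDen_ne_zero (hb : ∀ n, 1 ≤ n → 2 ≤ |b n|) (n : ℕ) : convDen b n ≠ 0 :=
  abs_pos.mp (lt_of_lt_of_le (by positivity) (succ_le_abs_convDen hb n))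

end Growth

lemma hasSum_inv_add_one_mul_add_two :
    HasSum (fun k : ℕ => (((k : ℝ) + 1) * (k + 2))⁻¹) 1 := by
  have h_tele (k : ℕ) :
      (((k : ℝ) + 1) * (k + 2))⁻¹ = ((k : ℝ) + 1)⁻¹ - ((k + 1 : ℕ) + 1 : ℝ)⁻¹ := by
    push_cast
    field_simp
    ring
  rw [hasSum_iff_tendsto_nat_of_nonneg (fun k => by positivity)]
  simp_rw [h_tele, Finset.sum_range_sub']
  simpa using (tendsto_one_div_add_atTop_nhds_zero_nat (𝕜 := ℝ)).const_sub 1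

/-- `-cfTerm b k` is the step `v_{k+1} - v_k` between consecutive convergents. -/
noncomputable def cfTerm (b : ℕ → ℤ) (k : ℕ) : ℝ :=
  ((convDen b (k + 1) * convDen b k : ℤ) : ℝ)⁻¹

noncomputable def cfTail (b : ℕ → ℤ) : ℝ := ∑' k, cfTerm b k

lemma cfTerm_neg (b : ℕ → ℤ) (k : ℕ) : cfTerm (-b) k = -cfTerm b k := by
  simp only [cfTerm, convDen_neg, Int.cast_mul, Int.cast_pow, Int.cast_neg, Int.cast_one]
  have h_sign : (-1 : ℝ) ^ (k + 1) * (-1) ^ k = -1 := by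
    rw [← pow_add]
    exact Odd.neg_one_pow ⟨k, by ring⟩
  rw [← inv_neg]
  congr 1
  linear_combination (convDen b (k + 1) * convDen b k : ℝ) * h_sign

lemma cfTail_neg (b : ℕ → ℤ) : cfTail (-b) = -cfTail b := by
  simp only [cfTail, cfTerm_neg, tsum_neg]

lemma cfTerm_eq_iff (b : ℕ → ℤ) :
    cfTerm b = (fun k : ℕ => (((k : ℝ) + 1) * (k + 2))⁻¹) ↔
      ∀ n, convDen b n = n + 1 := by
  constructor
  · intro h n
    induction n with
    | zero => simp [convDen_zero]
    | succ m ih =>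
      have hm := congrFun h m
      rw [cfTerm, inv_inj, ih] at hm
      have hm' : convDen b (m + 1) * ((m : ℤ) + 1) = ((m : ℤ) + 2) * ((m : ℤ) + 1) := by
        refine (Int.cast_inj (α := ℝ)).mp (hm.trans ?_)
        push_cast
        ring
      rw [mul_right_cancel₀ (by positivity) hm']
      push_cast
      ring
  · intro hQ
    funext k
    rw [cfTerm, hQ, hQ]
    push_cast
    ring

section Convergence

variable {b : ℕ → ℤ}

lemma cfConv_eq_coe (hb : ∀ n, 1 ≤ n → 2 ≤ |b n|) (n : ℕ) :
    cfConv b n = (((convNum b n : ℝ) / convDen b n : ℝ) : OnePoint ℝ) := by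
  rw [cfConv_eq_intPt, intPt, if_neg (convDen_ne_zero hb n)]

lemma convNum_div_convDen_eq (hb : ∀ n, 1 ≤ n → 2 ≤ |b n|) (n : ℕ) :
    (convNum b n : ℝ) / convDen b n = b 0 - ∑ k ∈ Finset.range n, cfTerm b k := by
  induction n with
  | zero => simp [convNum_zero, convDen_zero]
  | succ m ih =>
    have hdet : ((convNum b (m + 1) * convDen b m - convNum b m * convDen b (m + 1) : ℤ) : ℝ)
        = -1 := by
      exact_mod_cast convNum_succ_mul_convDen_sub b m
    have h₀ : (convDen b m : ℝ) ≠ 0 := Int.cast_ne_zero.mpr (convDen_ne_zero hb m)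
    have h₁ : (convDen b (m + 1) : ℝ) ≠ 0 := Int.cast_ne_zero.mpr (convDen_ne_zero hb (m + 1))
    rw [Finset.sum_range_succ, ← sub_sub, ← ih, cfTerm]
    push_cast at hdet ⊢
    field_simp
    linear_combination hdet

lemma abs_cfTerm_le (hb : ∀ n, 1 ≤ n → 2 ≤ |b n|) (k : ℕ) :
    |cfTerm b k| ≤ (((k : ℝ) + 1) * (k + 2))⁻¹ := by
  have h : ((k : ℤ) + 2) * ((k : ℤ) + 1) ≤ |convDen b (k + 1) * convDen b k| := by
    rw [abs_mul]
    have := succ_le_abs_convDen hb (k + 1)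
    push_cast at this
    exact mul_le_mul this (succ_le_abs_convDen hb k) (by positivity) (abs_nonneg _)
  rw [cfTerm, abs_inv, ← Int.cast_abs]
  apply inv_anti₀ (by positivity)
  rw [mul_comm]
  exact_mod_cast h

lemma summable_cfTerm (hb : ∀ n, 1 ≤ n → 2 ≤ |b n|) : Summable (cfTerm b) :=
  .of_norm_bounded hasSum_inv_add_one_mul_add_two.summable (abs_cfTerm_le hb)

lemma tendsto_cfConv (hb : ∀ n, 1 ≤ n → 2 ≤ |b n|) :
    Tendsto (cfConv b) atTop (𝓝 (((b 0 : ℝ) - cfTail b : ℝ) : OnePoint ℝ)) := by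
  rw [show cfConv b = _ from funext (cfConv_eq_coe hb)]
  simp_rw [convNum_div_convDen_eq hb]
  exact (OnePoint.continuous_coe.tendsto _).comp
    ((summable_cfTerm hb).hasSum.tendsto_sum_nat.const_sub _)

lemma abs_cfTail_le_one (hb : ∀ n, 1 ≤ n → 2 ≤ |b n|) : |cfTail b| ≤ 1 :=
  tsum_of_norm_bounded hasSum_inv_add_one_mul_add_two
    fun k => (Real.norm_eq_abs _).trans_le (abs_cfTerm_le hb k)

lemma cfTail_eq_one_iff (hb : ∀ n, 1 ≤ n → 2 ≤ |b n|) :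
    cfTail b = 1 ↔ ∀ n, 1 ≤ n → b n = 2 := by
  rw [← convDen_eq_succ_iff, ← cfTerm_eq_iff]
  constructor
  · intro h
    by_contra hne
    have hlt : cfTerm b < _ :=
      lt_of_le_of_ne (fun k => (le_abs_self _).trans (abs_cfTerm_le hb k)) hne
    exact (hasSum_strict_mono (summable_cfTerm hb).hasSum hasSum_inv_add_one_mul_add_two hlt).ne h
  · intro h
    rw [cfTail, h, hasSum_inv_add_one_mul_add_two.tsum_eq]

end Convergence

/-- **Lemma 3.** If `|bₙ| ≥ 2` for all `n ≥ 1`, then `[b₀, b₁, …]` converges to a value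
`α ∈ [b₀ - 1, b₀ + 1]`; moreover `α = b₀ - 1` iff all `bₙ = 2`, and `α = b₀ + 1` iff
all `bₙ = -2` (for `n ≥ 1`). -/
theorem stmt9 (b : ℕ → ℤ) (hb : ∀ n : ℕ, 1 ≤ n → 2 ≤ |b n|) :
    ∃ α : ℝ, Filter.Tendsto (cfConv b) Filter.atTop (nhds ((α : OnePoint ℝ))) ∧
      (b 0 : ℝ) - 1 ≤ α ∧ α ≤ (b 0 : ℝ) + 1 ∧
      (α = (b 0 : ℝ) - 1 ↔ ∀ n : ℕ, 1 ≤ n → b n = 2) ∧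
      (α = (b 0 : ℝ) + 1 ↔ ∀ n : ℕ, 1 ≤ n → b n = -2) := by
  have hb_neg : ∀ n, 1 ≤ n → 2 ≤ |(-b) n| := fun n hn => by simpa using hb n hn
  obtain ⟨h_lower, h_upper⟩ := abs_le.mp (abs_cfTail_le_one hb)
  refine ⟨b 0 - cfTail b, tendsto_cfConv hb, by linarith, by linarith, ?_, ?_⟩
  · rw [← cfTail_eq_one_iff hb]
    constructor <;> intro h <;> linarith
  · have h_iff := cfTail_eq_one_iff hb_neg
    simp only [cfTail_neg, Pi.neg_apply, neg_eq_iff_eq_neg] at h_iff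
    rw [← h_iff]
    constructor <;> intro h <;> linarith
end

section
/- Let (b₀,b₁,…) be a sequence of integers, let m ≥ 1 be the least index with b_m ∈ {0,1,−1}, and suppose b_m = 1 or b_m = −1. Let (v_n) and (v'_n) be the sequences of convergents of [b₀,b₁,…] and of Φ(b₀,b₁,…) respectively. Then v'_n = v_n for 0 ≤ n ≤ m−2, and v'_n = v_{n+1} for n ≥ m−1. -/
open Filter Topology OnePoint

/-! For `ε = ±1` one has `x - 1/(ε - 1/w) = (x - ε) - 1/(w - ε)`: the maps `s_x ∘ s_ε` collapse
into `s_{x-ε} ∘ (w ↦ w - ε)`, and that translation is absorbed by the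
next coefficient, `s_y(z) - ε = s_{y-ε}(z)`. -/

@[simp] lemma mob_infty (b : ℤ) : mob b ∞ = ((b : ℝ) : OnePoint ℝ) := rfl

@[simp] lemma mob_zero (b : ℤ) : mob b ((0 : ℝ) : OnePoint ℝ) = ∞ := if_pos rfl

lemma mob_coe_of_ne_zero (b : ℤ) {x : ℝ} (hx : x ≠ 0) :
    mob b (x : OnePoint ℝ) = (((b : ℝ) - 1 / x : ℝ) : OnePoint ℝ) := if_neg hx

lemma map_sub_mob (c y : ℤ) (z : OnePoint ℝ) :
    (mob y z).map (· - (c : ℝ)) = mob (y - c) z := by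
  induction z using OnePoint.rec with
  | infty => simp
  | coe x =>
    rcases eq_or_ne x 0 with rfl | hx
    · simp
    · simp only [mob_coe_of_ne_zero _ hx, map_some, Int.cast_sub]
      ring_nf

lemma mob_mob_of_isUnit (x : ℤ) {ε : ℤ} (hε : IsUnit ε) (w : OnePoint ℝ) :
    mob x (mob ε w) = mob (x - ε) (w.map (· - (ε : ℝ))) := by
  have hεε : (ε : ℝ) * ε = 1 := by exact_mod_cast Int.isUnit_mul_self hε
  have hε0 : (ε : ℝ) ≠ 0 := left_ne_zero_of_mul_eq_one hεε
  have hinv : 1 / (ε : ℝ) = ε := by field_simp; linarith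
  induction w using OnePoint.rec with
  | infty =>
    rw [mob_infty, mob_coe_of_ne_zero _ hε0, map_infty, mob_infty, hinv, Int.cast_sub]
  | coe u =>
    rcases eq_or_ne u 0 with rfl | hu
    · rw [mob_zero, mob_infty, map_some, zero_sub, mob_coe_of_ne_zero _ (neg_ne_zero.2 hε0),
        one_div_neg_eq_neg_one_div, hinv, Int.cast_sub, sub_neg_eq_add, sub_add_cancel]
    rw [mob_coe_of_ne_zero _ hu, map_some]
    rcases eq_or_ne u ε with rfl | huε
    · rw [hinv, sub_self, mob_zero, mob_zero]
    have h2 : (ε : ℝ) * u - 1 ≠ 0 := by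
      intro h; exact huε (by linear_combination ε * h - u * hεε)
    have h1 : (ε : ℝ) - 1 / u ≠ 0 := by
      rwa [sub_div' hu, div_ne_zero_iff, and_iff_left hu]
    rw [mob_coe_of_ne_zero _ h1, mob_coe_of_ne_zero _ (sub_ne_zero.2 huε), coe_eq_coe]
    push_cast
    field_simp
    linear_combination (u * (u - ε) + 1) * hεε

lemma cfConv_zero (b : ℕ → ℤ) : cfConv b 0 = mob (b 0) ∞ := rfl

lemma cfConv_succ (b : ℕ → ℤ) (n : ℕ) :
    cfConv b (n + 1) = mob (b 0) (cfConv (fun k => b (k + 1)) n) := by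
  rw [cfConv, List.range_succ_eq_map, List.map_cons, List.map_map]
  rfl

lemma map_sub_cfConv (c : ℤ) (d : ℕ → ℤ) (n : ℕ) :
    (cfConv d n).map (· - (c : ℝ)) = cfConv (Function.update d 0 (d 0 - c)) n := by
  cases n with
  | zero => rw [cfConv_zero, cfConv_zero, map_sub_mob, Function.update_self]
  | succ n =>
    rw [cfConv_succ, cfConv_succ, map_sub_mob, Function.update_self]
    rfl

-- Singularization of the coefficient `b (j + 1)` (meant to be `±1`), so `j` is its left neighbour.
def singularizeAt (b : ℕ → ℤ) (j k : ℕ) : ℤ :=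
  if k < j then b k
  else if k = j then b j - b (j + 1)
  else if k = j + 1 then b (j + 2) - b (j + 1)
  else b (k + 1)

lemma singularizeAt_zero_eq_update (b : ℕ → ℤ) :
    (fun k => singularizeAt b 0 (k + 1)) =
      Function.update (fun k => b (k + 2)) 0 (b 2 - b 1) := by
  funext k
  rcases k with _ | k <;> simp [singularizeAt]

lemma singularizeAt_succ_tail (b : ℕ → ℤ) (j : ℕ) :
    (fun k => singularizeAt b (j + 1) (k + 1)) = singularizeAt (fun k => b (k + 1)) j := by
  funext k
  simp only [singularizeAt]
  split_ifs <;> first | rfl | omega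

lemma cfConv_singularizeAt_of_lt {b : ℕ → ℤ} {j n : ℕ} (hn : n < j) :
    cfConv (singularizeAt b j) n = cfConv b n := by
  unfold cfConv
  congr 1
  refine List.map_congr_left fun k hk => if_pos ?_
  rw [List.mem_range] at hk
  omega

lemma cfConv_singularizeAt {b : ℕ → ℤ} {j : ℕ} (hb : IsUnit (b (j + 1))) {n : ℕ} (hn : j ≤ n) :
    cfConv (singularizeAt b j) n = cfConv b (n + 1) := by
  induction j generalizing b n with
  | zero =>
    have head : singularizeAt b 0 0 = b 0 - b 1 := if_neg (lt_irrefl 0) |>.trans (if_pos rfl)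
    cases n with
    | zero =>
      rw [cfConv_zero, cfConv_succ, cfConv_zero, mob_mob_of_isUnit _ hb, map_infty, head]
    | succ n =>
      rw [cfConv_succ, cfConv_succ, cfConv_succ, mob_mob_of_isUnit _ hb, map_sub_cfConv, head,
        singularizeAt_zero_eq_update]
  | succ j ih =>
    obtain ⟨n, rfl⟩ : ∃ n', n = n' + 1 := ⟨n - 1, by omega⟩
    rw [cfConv_succ, cfConv_succ b, singularizeAt_succ_tail, ih hb (by omega)]
    rfl

lemma Phi_eq_singularizeAt {b : ℕ → ℤ} {j : ℕ} (hmin : ∀ i < j + 1, ¬ badIdx b i)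
    (hb : IsUnit (b (j + 1))) : Phi b = singularizeAt b j := by
  have hbad : badIdx b (j + 1) := ⟨Nat.le_add_left 1 j, Or.inr (Int.isUnit_iff.1 hb)⟩
  have hfind : Nat.find ⟨j + 1, hbad⟩ = j + 1 := (Nat.find_eq_iff _).2 ⟨hbad, hmin⟩
  unfold Phi
  rw [dif_pos ⟨j + 1, hbad⟩]
  simp only [hfind, if_neg hb.ne_zero, Nat.add_sub_cancel, Nat.add_lt_add_iff_right]
  funext k
  unfold singularizeAt
  rcases Int.isUnit_iff.1 hb with h | h
  · rw [if_pos h, h]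
  · rw [if_neg (by omega), h]
    simp only [sub_neg_eq_add]

/-- **Lemma 5, case `b_m = ±1`.** If `m ≥ 1` is the least index with `b_m ∈ {0, 1, -1}` and
`b_m = ±1`, then the convergents of `Φ(b)` are `v₀, …, v_{m-2}, v_m, v_{m+1}, …`. -/
theorem stmt12 (b : ℕ → ℤ) (m : ℕ) (hm : 1 ≤ m)
    (hmin : ∀ j : ℕ, 1 ≤ j → j < m → ¬ (b j = 0 ∨ b j = 1 ∨ b j = -1))
    (hbm : b m = 1 ∨ b m = -1) :
    (∀ n : ℕ, n + 2 ≤ m → cfConv (Phi b) n = cfConv b n) ∧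
    (∀ n : ℕ, m ≤ n + 1 → cfConv (Phi b) n = cfConv b (n + 1)) := by
  obtain ⟨j, rfl⟩ : ∃ j, m = j + 1 := ⟨m - 1, by omega⟩
  have hunit : IsUnit (b (j + 1)) := Int.isUnit_iff.2 hbm
  rw [Phi_eq_singularizeAt (fun i hi ⟨hi1, hbi⟩ => hmin i hi1 hi hbi) hunit]
  exact ⟨fun n hn => cfConv_singularizeAt_of_lt (by omega),
    fun n hn => cfConv_singularizeAt hunit (by omega)⟩
end

section
/- Let (b₀,b₁,…) be a sequence of integers. For every n ∈ ℕ and every r ∈ ℕ there exists a unique k ∈ ℕ such that the index-tracking sequence e⁽⁰⁾(k), e⁽¹⁾(k), … has length greater than n and e⁽ⁿ⁾(k) = r. -/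
open Filter Topology OnePoint

lemma eStep_exu (c : ℕ → ℤ) (r : ℕ) : ∃! e : ℕ, eStep c e = Option.some r := by
  unfold eStep
  by_cases h : ∃ m, badIdx c m
  · simp only [dif_pos h]
    set m := Nat.find h with hmdef
    have hm1 : 1 ≤ m := (Nat.find_spec h).1
    by_cases hc : c m = 0
    · simp only [if_pos hc]
      by_cases hr : r + 2 ≤ m
      · refine ⟨r, by simp [hr], ?_⟩
        intro y hy
        split_ifs at hy with h1 h2 <;>
          simp only [Option.some.injEq] at hy <;> first | omega | simp_all
      · refine ⟨r + 2, ?_, ?_⟩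
        · have h1 : ¬ (r + 2 + 2 ≤ m) := by omega
          have h2 : ¬ (r + 2 = m - 1 ∨ r + 2 = m) := by omega
          simp [h1, h2]
        · intro y hy
          split_ifs at hy with h1 h2 <;>
            simp only [Option.some.injEq] at hy <;> first | omega | simp_all
    · simp only [if_neg hc]
      by_cases hr : r + 2 ≤ m
      · refine ⟨r, by simp [hr], ?_⟩
        intro y hy
        split_ifs at hy with h1 h2 <;>
          simp only [Option.some.injEq] at hy <;> first | omega | simp_all
      · refine ⟨r + 1, ?_, ?_⟩
        · have h1 : ¬ (r + 1 + 2 ≤ m) := by omega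
          have h2 : ¬ (r + 1 = m - 1) := by omega
          simp [h1, h2]
        · intro y hy
          split_ifs at hy with h1 h2 <;>
            simp only [Option.some.injEq] at hy <;> first | omega | simp_all
  · simp only [dif_neg h, Option.some.injEq]
    exact ⟨r, rfl, fun y hy => hy⟩

/-- **Lemma (uniqueness of tracked indices).** For every `n` and `r` there is a unique `k`
whose index-tracking sequence survives to step `n` with `e⁽ⁿ⁾(k) = r`. -/
theorem stmt13 (b : ℕ → ℤ) (n r : ℕ) :
    ∃! k : ℕ, eSeq b k n = Option.some r := by
  induction n generalizing r with
  | zero =>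
    refine ⟨r, rfl, fun y hy => ?_⟩
    simpa [eSeq] using hy
  | succ n ih =>
    obtain ⟨r', hr', hr'u⟩ := eStep_exu (Phi^[n] b) r
    obtain ⟨k, hk, hku⟩ := ih r'
    refine ⟨k, ?_, ?_⟩
    · show (eSeq b k n).bind (eStep (Phi^[n] b)) = Option.some r
      rw [hk]; exact hr'
    · intro y hy
      have hy' : (eSeq b y n).bind (eStep (Phi^[n] b)) = Option.some r := hy
      cases hs : eSeq b y n with
      | none => rw [hs] at hy'; exact absurd hy' (by simp [Option.bind])
      | some s =>
        rw [hs] at hy'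
        simp only [Option.bind_some] at hy'
        have hsr : s = r' := hr'u s hy'
        exact hku y (hs.trans (by rw [hsr]))
end

section
/- Let (b₀,b₁,…) be a sequence of integers such that p⁽ⁿ⁾ does not tend to ∞. Then the set of k ∈ ℕ for which the index-tracking sequence e⁽⁰⁾(k), e⁽¹⁾(k), … is infinite (never terminates) is finite. -/
open Filter Topology OnePoint

/-! A surviving index sequence `e⁽ⁿ⁾(k)` never increases, so it is eventually constant. If
`p⁽ⁿ⁾ ≤ N` infinitely often, its eventual value is below `N - 1`: at a step with `p⁽ⁿ⁾ ≤ N` an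
index `e ≥ N - 1` either terminates or strictly decreases. Distinct surviving sequences never
merge, since one step is injective where it is defined; so at a late enough time the survivors
sit at distinct positions in `{0, …, N - 2}`, and there are at most `N - 1` of them. -/

section

variable {b c : ℕ → ℤ} {k n v N : ℕ}

lemma one_le_find_badIdx (hb : ∃ m, badIdx c m) : 1 ≤ Nat.find hb :=
  (Nat.find_spec hb).1

lemma exists_find_badIdx_le_of_pIdx_le (hp : pIdx c ≤ N) :
    ∃ hb : ∃ m, badIdx c m, Nat.find hb ≤ N := by
  unfold pIdx at hp
  split_ifs at hp with hb
  · exact ⟨hb, by exact_mod_cast hp⟩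
  · simp at hp

lemma eStep_le {e : ℕ} (h : eStep c e = Option.some v) : v ≤ e := by
  unfold eStep at h
  split_ifs at h <;> grind

lemma eStep_inj {e e' : ℕ} (h : eStep c e = Option.some v) (h' : eStep c e' = Option.some v) :
    e = e' := by
  by_cases hb : ∃ m, badIdx c m
  · have := one_le_find_badIdx hb
    simp only [eStep, dif_pos hb] at h h'
    split_ifs at h h' <;> grind
  · simp_all [eStep]

lemma eStep_lt {e : ℕ} (hp : pIdx c ≤ N) (he : N < e + 2) (h : eStep c e = Option.some v) :
    v < e := by
  obtain ⟨hb, hN⟩ := exists_find_badIdx_le_of_pIdx_le hp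
  have := one_le_find_badIdx hb
  simp only [eStep, dif_pos hb] at h
  split_ifs at h <;> grind

lemma eSeq_succ_of_eq_some (h : eSeq b k n = Option.some v) :
    eSeq b k (n + 1) = eStep (Phi^[n] b) v := by
  rw [eSeq, h, Option.bind_some]

lemma eSeq_inj {k' : ℕ} (h : eSeq b k n = Option.some v) (h' : eSeq b k' n = Option.some v) :
    k = k' := by
  induction n generalizing v with
  | zero => simp_all [eSeq]
  | succ n ih =>
    obtain ⟨w, hw, hv⟩ := Option.bind_eq_some_iff.mp h
    obtain ⟨w', hw', hv'⟩ := Option.bind_eq_some_iff.mp h'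
    obtain rfl := eStep_inj hv hv'
    exact ih hw hw'

lemma eventually_eSeq_add_two_le (hN : ∃ᶠ n in atTop, pIdx (Phi^[n] b) ≤ N)
    (hk : ∀ n, eSeq b k n ≠ none) :
    ∀ᶠ n in atTop, ∀ v, eSeq b k n = Option.some v → v + 2 ≤ N := by
  choose E hE using fun n => Option.ne_none_iff_exists'.mp (hk n)
  have hstep (n : ℕ) : eStep (Phi^[n] b) (E n) = Option.some (E (n + 1)) := by
    rw [← eSeq_succ_of_eq_some (hE n), hE]
  obtain ⟨n₀, hconst⟩ := WellFoundedLT.antitone_chain_condition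
    (antitone_nat_of_succ_le fun n => eStep_le (hstep n))
  refine eventually_atTop.2 ⟨n₀, fun n hn v hv => ?_⟩
  obtain rfl : E n = v := Option.some_inj.mp ((hE n).symm.trans hv)
  by_contra! hlarge
  obtain ⟨n', hn', hp⟩ := hN.forall_exists_of_atTop n
  have := hconst n hn
  have := hconst n' (by omega)
  have := hconst (n' + 1) (by omega)
  have := eStep_lt hp (by omega) (hstep n')
  omega

lemma card_le_of_forall_eSeq_ne_none (hN : ∃ᶠ n in atTop, pIdx (Phi^[n] b) ≤ N)
    (T : Finset ℕ) (hT : ∀ k ∈ T, ∀ n, eSeq b k n ≠ none) : T.card ≤ N - 1 := by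
  obtain ⟨n, hn⟩ := ((Finset.eventually_all T).2 fun k hk =>
    eventually_eSeq_add_two_le hN (hT k hk)).exists
  have hval : ∀ k ∈ T, eSeq b k n = Option.some ((eSeq b k n).getD 0) := fun k hk => by
    obtain ⟨v, hv⟩ := Option.ne_none_iff_exists'.mp (hT k hk n)
    rw [hv, Option.getD_some]
  calc T.card ≤ (Finset.range (N - 1)).card :=
        Finset.card_le_card_of_injOn (fun k => (eSeq b k n).getD 0)
          (fun k hk => Finset.mem_range.2 (by have := hn k hk _ (hval k hk); dsimp only; omega))
          (fun k hk k' hk' hkk' =>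
            eSeq_inj (hval k hk) ((hval k' hk').trans (congrArg _ hkk'.symm)))
    _ = N - 1 := Finset.card_range _

end

/-- **Lemma 9.** If `p⁽ⁿ⁾ ↛ ∞`, then only finitely many of the index-tracking sequences
`e⁽⁰⁾(k), e⁽¹⁾(k), …` are infinite. -/
theorem stmt18 (b : ℕ → ℤ) (hp : ¬ PTendsToTop b) :
    {k : ℕ | ∀ n : ℕ, eSeq b k n ≠ none}.Finite := by
  obtain ⟨N, hN⟩ : ∃ N : ℕ, ∃ᶠ n in atTop, pIdx (Phi^[n] b) ≤ N := by
    simpa [PTendsToTop, frequently_atTop] using hp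
  by_contra hinf
  obtain ⟨T, hTsub, hTcard⟩ := Set.Infinite.exists_subset_card_eq hinf (N + 1)
  have := card_le_of_forall_eSeq_ne_none hN T hTsub
  omega
end
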